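/- Fix a real k > −1 and let a < b be consecutive positive zeros of J_{k+1} with a < 2·√((k+2)(k+3)) < b. Then J_{k+4}(r) ≠ 0 for every r in the open interval (a, b). -/

import Mathlib

open Real

/-- Bessel function of the first kind of real order `k`, defined by its power series
(valid for `r > 0`, using real powers). -/
noncomputable def besselJ (k r : ℝ) : ℝ :=
  ∑' m : ℕ, ((-1 : ℝ) ^ m / (m.factorial * Real.Gamma (m + k + 1))) * (r / 2) ^ ((2 * m : ℝ) + k)

/-!
In the variable `x = r²` one has `J_ν(r) = (r/2)^ν F_ν(x)` with `F_ν = besselSeries ν` entire,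
`F_ν' = -F_{ν+1}/4` and `(x^{ν+1} F_{ν+1})' = x^ν F_ν`. Eliminating `F_{k+3}` between two
contiguous relations gives `x² F_{k+4} = 4(γ - x) F_{k+2} - 16(k+3) F_{k+1}` with
`γ = 4(k+2)(k+3)`, so `F_{k+4}(γ)` and `F_{k+1}(γ)` have opposite signs. Suppose `F_{k+4}(x₀) = 0`
while `F_{k+1}` has constant sign `s` between `x₀` and `γ`. The same identity at `x₀` fixes the
sign of `F_{k+2}(x₀)`, and the monotonicity of `x^{ν+1} s F_{ν+1}` carries signs from `x₀` through
`F_{k+2}`, `F_{k+3}`, `F_{k+4}` up to `γ`, where it yields `s F_{k+4}(γ) > 0`: a contradiction.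
-/

open Set Filter

noncomputable def besselCoeff (ν : ℝ) (m : ℕ) : ℝ :=
  (-1) ^ m / (4 ^ m * m.factorial * Gamma (m + ν + 1))

noncomputable def besselSeries (ν x : ℝ) : ℝ :=
  ∑' m : ℕ, besselCoeff ν m * x ^ m

section Coefficients

variable {ν : ℝ}

lemma natCast_add_add_one_pos (hν : -1 < ν) (m : ℕ) : 0 < (m : ℝ) + ν + 1 := by
  linarith [m.cast_nonneg (α := ℝ)]

lemma besselCoeff_eq_mul_besselCoeff_add_one {m : ℕ} (h : (m : ℝ) + ν + 1 ≠ 0) :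
    besselCoeff ν m = (m + ν + 1) * besselCoeff (ν + 1) m := by
  have hΓ : Gamma (m + (ν + 1) + 1) = (m + ν + 1) * Gamma (m + ν + 1) := by
    rw [← Gamma_add_one h]; ring_nf
  rw [besselCoeff, besselCoeff, hΓ]
  by_cases h0 : Gamma (m + ν + 1) = 0
  · simp [h0]
  · field_simp

lemma succ_mul_besselCoeff_succ (m : ℕ) :
    (m + 1) * besselCoeff ν (m + 1) = -besselCoeff (ν + 1) m / 4 := by
  have hΓ : ((m + 1 : ℕ) : ℝ) + ν + 1 = m + (ν + 1) + 1 := by push_cast; ring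
  rw [besselCoeff, besselCoeff, hΓ, Nat.factorial_succ, pow_succ, pow_succ]
  push_cast
  field_simp

lemma abs_besselCoeff_succ (hν : -1 < ν) (m : ℕ) :
    |besselCoeff ν (m + 1)| = |besselCoeff ν m| / (4 * (m + 1) * (m + ν + 1)) := by
  have hm := natCast_add_add_one_pos hν m
  have h := congrArg abs (succ_mul_besselCoeff_succ (ν := ν) m)
  rw [abs_mul, abs_of_pos (by positivity), abs_div, abs_neg,
    abs_of_pos (by norm_num : (0 : ℝ) < 4)] at h
  rw [besselCoeff_eq_mul_besselCoeff_add_one hm.ne', abs_mul, abs_of_pos hm,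
    eq_div_iff (by positivity)]
  linear_combination (4 * (m + ν + 1)) * h

lemma summable_abs_besselCoeff_mul_pow (hν : -1 < ν) (R : ℝ) :
    Summable fun m => |besselCoeff ν m| * R ^ m := by
  refine summable_of_ratio_norm_eventually_le (r := 1 / 2) (by norm_num) ?_
  filter_upwards [eventually_ge_atTop ⌈|R| + |ν|⌉₊] with m hm
  have hm' : |R| + |ν| ≤ m := (Nat.le_ceil _).trans (by exact_mod_cast hm)
  have hR : |R| ≤ 2 * (m + 1) := by linarith [abs_nonneg ν]
  have hν' : 1 ≤ (m : ℝ) + ν + 1 := by linarith [neg_le_abs ν, abs_nonneg R]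
  rw [norm_mul, norm_mul, norm_abs_eq_norm, norm_abs_eq_norm, norm_pow, norm_pow, pow_succ,
    Real.norm_eq_abs, Real.norm_eq_abs, Real.norm_eq_abs, abs_besselCoeff_succ hν]
  have := abs_nonneg (besselCoeff ν m)
  have := pow_nonneg (abs_nonneg R) m
  calc |besselCoeff ν m| / (4 * (m + 1) * (m + ν + 1)) * (|R| ^ m * |R|)
      = |besselCoeff ν m| * |R| ^ m * (|R| / (4 * (m + 1) * (m + ν + 1))) := by ring
    _ ≤ |besselCoeff ν m| * |R| ^ m * (1 / 2) := by
      refine mul_le_mul_of_nonneg_left ?_ (by positivity)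
      rw [div_le_iff₀ (by positivity)]
      nlinarith
    _ = 1 / 2 * (|besselCoeff ν m| * |R| ^ m) := by ring

lemma summable_besselCoeff_mul_pow (hν : -1 < ν) (x : ℝ) :
    Summable fun m => besselCoeff ν m * x ^ m :=
  .of_norm <| by simpa [abs_mul, abs_pow] using summable_abs_besselCoeff_mul_pow hν |x|

end Coefficients

lemma hasDerivAt_tsum_mul_pow {a : ℕ → ℝ}
    (ha : ∀ R, Summable fun m : ℕ => (m + 1) * |a (m + 1)| * R ^ m) (x : ℝ) :
    HasDerivAt (fun y => ∑' m, a m * y ^ m) (∑' m : ℕ, (m + 1) * a (m + 1) * x ^ m) x := by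
  set R := |x| + 1
  have hR : 0 < R := by positivity
  have hxR : x ∈ Ioo (-R) R := abs_lt.1 (lt_add_one _)
  have hu : Summable fun n : ℕ => |a n| * n * R ^ (n - 1) := by
    refine (summable_nat_add_iff 1).1 ((ha R).congr fun m => ?_)
    push_cast
    ring
  have hbound (n : ℕ) {y : ℝ} (hy : |y| ≤ R) :
      ‖a n * n * y ^ (n - 1)‖ ≤ |a n| * n * R ^ (n - 1) := by
    rw [norm_mul, norm_mul, norm_pow, Real.norm_eq_abs, Real.norm_eq_abs, Real.norm_eq_abs,
      Nat.abs_cast]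
    gcongr
  have hderiv := hasDerivAt_tsum_of_isPreconnected hu isOpen_Ioo isPreconnected_Ioo
    (g := fun n y => a n * y ^ n) (g' := fun n y => a n * n * y ^ (n - 1))
    (fun n y _ => by simpa [mul_assoc] using (hasDerivAt_pow n y).const_mul (a n))
    (fun n y hy => hbound n (abs_lt.2 hy).le) (y₀ := 0) ⟨neg_lt_zero.2 hR, hR⟩
    ((hasSum_single 0 fun n hn => by simp [hn]).summable) hxR
  rw [(hu.of_norm_bounded fun n => hbound n (by simp [R])).tsum_eq_zero_add] at hderiv
  refine hderiv.congr_deriv ?_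
  simp only [Nat.cast_zero, mul_zero, zero_mul, zero_add, Nat.add_sub_cancel, Nat.cast_succ]
  exact tsum_congr fun m => by ring

section Series

variable {ν : ℝ}

lemma hasDerivAt_besselSeries (hν : -1 < ν) (x : ℝ) :
    HasDerivAt (besselSeries ν) (-besselSeries (ν + 1) x / 4) x := by
  have hcoeff (m : ℕ) : (m + 1) * besselCoeff ν (m + 1) = -besselCoeff (ν + 1) m / 4 :=
    succ_mul_besselCoeff_succ m
  have hsum (R : ℝ) : Summable fun m : ℕ => (m + 1) * |besselCoeff ν (m + 1)| * R ^ m := by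
    have := (summable_abs_besselCoeff_mul_pow (ν := ν + 1) (by linarith) R).div_const 4
    refine this.congr fun m => ?_
    rw [← abs_of_nonneg (by positivity : (0 : ℝ) ≤ m + 1), ← abs_mul, hcoeff, abs_div, abs_neg,
      abs_of_pos (by norm_num : (0 : ℝ) < 4)]
    ring
  refine (hasDerivAt_tsum_mul_pow hsum x).congr_deriv ?_
  simp only [hcoeff, besselSeries, ← tsum_div_const, ← tsum_neg]
  exact tsum_congr fun m => by ring

lemma continuous_besselSeries (hν : -1 < ν) : Continuous (besselSeries ν) :=
  continuous_iff_continuousAt.2 fun x => (hasDerivAt_besselSeries hν x).continuousAt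

lemma besselSeries_contiguous (hν : -1 < ν) (x : ℝ) :
    besselSeries ν x = (ν + 1) * besselSeries (ν + 1) x - x / 4 * besselSeries (ν + 2) x := by
  have hterm (m : ℕ) : besselCoeff ν (m + 1) * x ^ (m + 1)
      - (ν + 1) * (besselCoeff (ν + 1) (m + 1) * x ^ (m + 1))
      = -(x / 4) * (besselCoeff (ν + 2) m * x ^ m) := by
    have hm := (natCast_add_add_one_pos hν (m + 1)).ne'
    have h := succ_mul_besselCoeff_succ (ν := ν + 1) m
    rw [show ν + 1 + 1 = ν + 2 by ring] at h
    rw [besselCoeff_eq_mul_besselCoeff_add_one hm]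
    push_cast at h ⊢
    linear_combination x ^ (m + 1) * h
  have h0 : besselCoeff ν 0 * x ^ 0 - (ν + 1) * (besselCoeff (ν + 1) 0 * x ^ 0) = 0 := by
    rw [besselCoeff_eq_mul_besselCoeff_add_one (natCast_add_add_one_pos hν 0).ne']
    simp
  have hs₀ := summable_besselCoeff_mul_pow hν x
  have hs₁ := (summable_besselCoeff_mul_pow (ν := ν + 1) (by linarith) x).mul_left (ν + 1)
  have hdiff := (hs₀.sub hs₁).tsum_eq_zero_add
  rw [h0, zero_add, tsum_congr hterm, tsum_mul_left, hs₀.tsum_sub hs₁, tsum_mul_left] at hdiff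
  unfold besselSeries
  linarith

end Series

lemma besselJ_eq_rpow_mul_besselSeries (ν : ℝ) {r : ℝ} (hr : 0 < r) :
    besselJ ν r = (r / 2) ^ ν * besselSeries ν (r ^ 2) := by
  rw [besselJ, besselSeries, ← tsum_mul_left]
  refine tsum_congr fun m => ?_
  have hpow : (r / 2) ^ ((2 * m : ℝ) + ν) = (r / 2) ^ ν * (r ^ 2 / 4) ^ m := by
    rw [rpow_add (by positivity), show (2 * m : ℝ) = (2 * m : ℕ) by push_cast; ring,
      rpow_natCast, pow_mul]
    ring
  rw [hpow, besselCoeff, div_pow]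
  field_simp

section Sign

variable {ν μ s u v : ℝ}

lemma hasDerivAt_rpow_mul_besselSeries (hν : -1 < ν) {x : ℝ} (hx : 0 < x) :
    HasDerivAt (fun y => y ^ (ν + 1) * besselSeries (ν + 1) y) (x ^ ν * besselSeries ν x) x := by
  have hpow := hasDerivAt_rpow_const (p := ν + 1) (Or.inl hx.ne')
  rw [add_sub_cancel_right] at hpow
  refine (hpow.mul (hasDerivAt_besselSeries (by linarith) x)).congr_deriv ?_
  rw [besselSeries_contiguous hν x, rpow_add_one hx.ne', show ν + 1 + 1 = ν + 2 by ring]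
  ring

lemma strictMonoOn_rpow_mul_besselSeries (hν : -1 < ν) (hu : 0 < u)
    (hF : ∀ x ∈ Ioo u v, 0 < s * besselSeries ν x) :
    StrictMonoOn (fun x => x ^ (ν + 1) * (s * besselSeries (ν + 1) x)) (Icc u v) := by
  have hderiv {x : ℝ} (hx : 0 < x) :
      HasDerivAt (fun y => y ^ (ν + 1) * (s * besselSeries (ν + 1) y))
        (s * (x ^ ν * besselSeries ν x)) x := by
    simpa only [mul_left_comm s] using (hasDerivAt_rpow_mul_besselSeries hν hx).const_mul s
  refine strictMonoOn_of_deriv_pos (convex_Icc u v)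
    (fun x hx => (hderiv (hu.trans_le hx.1)).continuousAt.continuousWithinAt) fun x hx => ?_
  rw [interior_Icc] at hx
  have hx0 := hu.trans hx.1
  rw [(hderiv hx0).deriv, mul_left_comm]
  exact mul_pos (rpow_pos_of_pos hx0 ν) (hF x hx)

lemma mul_besselSeries_pos_of_nonneg_left (hμ : μ = ν + 1) (hν : -1 < ν) (hu : 0 < u)
    (hF : ∀ x ∈ Ioo u v, 0 < s * besselSeries ν x) (hu' : 0 ≤ s * besselSeries μ u) :
    ∀ x ∈ Ioc u v, 0 < s * besselSeries μ x := by
  subst hμ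
  intro x hx
  have hlt := strictMonoOn_rpow_mul_besselSeries hν hu hF
    (left_mem_Icc.2 (hx.1.trans_le hx.2).le) (Ioc_subset_Icc_self hx) hx.1
  refine pos_of_mul_pos_right (hlt.trans_le' ?_) (rpow_pos_of_pos (hu.trans hx.1) _).le
  exact mul_nonneg (rpow_pos_of_pos hu _).le hu'

lemma mul_besselSeries_neg_of_nonpos_right (hμ : μ = ν + 1) (hν : -1 < ν) (hu : 0 < u)
    (hF : ∀ x ∈ Ioo u v, 0 < s * besselSeries ν x) (hv : s * besselSeries μ v ≤ 0) :
    ∀ x ∈ Ico u v, s * besselSeries μ x < 0 := by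
  subst hμ
  intro x hx
  have hlt := strictMonoOn_rpow_mul_besselSeries hν hu hF
    (Ico_subset_Icc_self hx) (right_mem_Icc.2 (hx.1.trans hx.2.le)) hx.2
  refine neg_of_mul_neg_right (hlt.trans_le ?_) (rpow_pos_of_pos (hu.trans_le hx.1) _).le
  exact mul_nonpos_of_nonneg_of_nonpos
    (rpow_pos_of_pos (hu.trans_le (hx.1.trans hx.2.le)) _).le hv

end Sign

lemma IsPreconnected.mul_pos_of_ne_zero {X : Type*} [TopologicalSpace X] {S : Set X}
    {f : X → ℝ} (hS : IsPreconnected S) (hf : ContinuousOn f S) (hf0 : ∀ x ∈ S, f x ≠ 0)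
    {p q : X} (hp : p ∈ S) (hq : q ∈ S) : 0 < f p * f q := by
  rcases (hf0 p hp).lt_or_gt with hp' | hp' <;> rcases (hf0 q hq).lt_or_gt with hq' | hq'
  · exact mul_pos_of_neg_of_neg hp' hq'
  · obtain ⟨x, hx, hfx⟩ := hS.intermediate_value₂ hp hq hf continuousOn_const hp'.le hq'.le
    exact absurd hfx (hf0 x hx)
  · obtain ⟨x, hx, hfx⟩ := hS.intermediate_value₂ hq hp hf continuousOn_const hq'.le hp'.le
    exact absurd hfx (hf0 x hx)
  · exact mul_pos hp' hq'

section AddFour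

variable {k s x : ℝ}

lemma besselSeries_add_one_eq (hk : -1 < k) (x : ℝ) :
    besselSeries (k + 1) x =
      (k + 2) * besselSeries (k + 2) x - x / 4 * besselSeries (k + 3) x := by
  rw [besselSeries_contiguous (by linarith) x, show k + 1 + 1 = k + 2 by ring,
    show k + 1 + 2 = k + 3 by ring]

lemma besselSeries_add_two_eq (hk : -1 < k) (x : ℝ) :
    besselSeries (k + 2) x =
      (k + 3) * besselSeries (k + 3) x - x / 4 * besselSeries (k + 4) x := by
  rw [besselSeries_contiguous (by linarith) x, show k + 2 + 1 = k + 3 by ring,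
    show k + 2 + 2 = k + 4 by ring]

lemma sq_mul_besselSeries_add_four (hk : -1 < k) (x : ℝ) :
    x ^ 2 * besselSeries (k + 4) x = 4 * (4 * (k + 2) * (k + 3) - x) * besselSeries (k + 2) x
      - 16 * (k + 3) * besselSeries (k + 1) x := by
  linear_combination 16 * (k + 3) * besselSeries_add_one_eq hk x
    + 4 * x * besselSeries_add_two_eq hk x

lemma mul_besselSeries_add_four_neg (hk : -1 < k)
    (hs : 0 < s * besselSeries (k + 1) (4 * (k + 2) * (k + 3))) :
    s * besselSeries (k + 4) (4 * (k + 2) * (k + 3)) < 0 := by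
  have hγ : 0 < 4 * (k + 2) * (k + 3) := by nlinarith
  have h := congrArg (s * ·) (sq_mul_besselSeries_add_four hk (4 * (k + 2) * (k + 3)))
  simp only [sub_self, mul_zero, zero_mul, zero_sub] at h
  nlinarith

lemma mul_besselSeries_add_four_pos_of_lt (hk : -1 < k) (hx : 0 < x)
    (hxγ : x < 4 * (k + 2) * (k + 3))
    (hs : ∀ y ∈ Icc x (4 * (k + 2) * (k + 3)), 0 < s * besselSeries (k + 1) y)
    (hx4 : besselSeries (k + 4) x = 0) :
    0 < s * besselSeries (k + 4) (4 * (k + 2) * (k + 3)) := by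
  have hstar := congrArg (s * ·) (sq_mul_besselSeries_add_four hk x)
  have hrec := congrArg (s * ·) (besselSeries_add_two_eq hk x)
  simp only [hx4, mul_zero] at hstar hrec
  have hF1 := hs x (left_mem_Icc.2 hxγ.le)
  have h2 : 0 ≤ s * besselSeries (k + 2) x := by nlinarith
  have h3 : 0 ≤ s * besselSeries (k + 3) x := by nlinarith
  have hF2 := mul_besselSeries_pos_of_nonneg_left (ν := k + 1) (by ring) (by linarith) hx
    (fun y hy => hs y (Ioo_subset_Icc_self hy)) h2
  have hF3 := mul_besselSeries_pos_of_nonneg_left (ν := k + 2) (by ring) (by linarith) hx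
    (fun y hy => hF2 y (Ioo_subset_Ioc_self hy)) h3
  have hF4 := mul_besselSeries_pos_of_nonneg_left (ν := k + 3) (μ := k + 4) (by ring)
    (by linarith) hx (fun y hy => hF3 y (Ioo_subset_Ioc_self hy)) (by rw [hx4, mul_zero])
  exact hF4 _ ⟨hxγ, le_rfl⟩

lemma mul_besselSeries_add_four_pos_of_gt (hk : -1 < k) (hxγ : 4 * (k + 2) * (k + 3) < x)
    (hs : ∀ y ∈ Icc (4 * (k + 2) * (k + 3)) x, 0 < s * besselSeries (k + 1) y)
    (hx4 : besselSeries (k + 4) x = 0) :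
    0 < s * besselSeries (k + 4) (4 * (k + 2) * (k + 3)) := by
  have hγ : 0 < 4 * (k + 2) * (k + 3) := by nlinarith
  have hstar := congrArg (s * ·) (sq_mul_besselSeries_add_four hk x)
  simp only [hx4, mul_zero] at hstar
  have h2 : s * besselSeries (k + 2) x ≤ 0 := by nlinarith [hs x (right_mem_Icc.2 hxγ.le)]
  have hF2 := mul_besselSeries_neg_of_nonpos_right (ν := k + 1) (by ring) (by linarith) hγ
    (fun y hy => hs y (Ioo_subset_Icc_self hy)) h2
  have hF3 (y : ℝ) (hy : y ∈ Ioo (4 * (k + 2) * (k + 3)) x) :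
      0 < -s * besselSeries (k + 3) y := by
    have hrec := congrArg (s * ·) (besselSeries_add_one_eq hk y)
    have := hs y (Ioo_subset_Icc_self hy)
    have := hF2 y (Ioo_subset_Ico_self hy)
    have : 0 < y := hγ.trans hy.1
    nlinarith
  have hF4 := mul_besselSeries_neg_of_nonpos_right (ν := k + 3) (μ := k + 4) (by ring)
    (by linarith) hγ hF3 (by rw [hx4, mul_zero])
  linarith [hF4 _ (left_mem_Ico.2 hxγ)]

end AddFour

lemma besselSeries_add_four_ne_zero {k x : ℝ} (hk : -1 < k) (hx : 0 < x)
    (hF : ∀ y ∈ uIcc x (4 * (k + 2) * (k + 3)), besselSeries (k + 1) y ≠ 0) :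
    besselSeries (k + 4) x ≠ 0 := by
  set γ := 4 * (k + 2) * (k + 3)
  set s := besselSeries (k + 1) γ
  have hs (y : ℝ) (hy : y ∈ uIcc x γ) : 0 < s * besselSeries (k + 1) y :=
    isPreconnected_uIcc.mul_pos_of_ne_zero (continuous_besselSeries (by linarith)).continuousOn
      hF right_mem_uIcc hy
  have hγ : s * besselSeries (k + 4) γ < 0 :=
    mul_besselSeries_add_four_neg hk (hs γ right_mem_uIcc)
  intro hx4
  rcases lt_trichotomy x γ with hlt | rfl | hgt
  · exact hγ.not_gt <| mul_besselSeries_add_four_pos_of_lt hk hx hlt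
      (fun y hy => hs y (Icc_subset_uIcc hy)) hx4
  · exact hγ.ne (by rw [hx4, mul_zero])
  · exact hγ.not_gt <| mul_besselSeries_add_four_pos_of_gt hk hgt
      (fun y hy => hs y (Icc_subset_uIcc' hy)) hx4

theorem besselJ_add_four_no_zero_general (k : ℝ) (hk : -1 < k) (a b : ℝ)
    (ha : 0 < a)
    (hne : ∀ r ∈ Set.Ioo a b, besselJ (k + 1) r ≠ 0)
    (hA : a < 2 * Real.sqrt ((k + 2) * (k + 3)))
    (hB : 2 * Real.sqrt ((k + 2) * (k + 3)) < b) :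
    ∀ r ∈ Set.Ioo a b, besselJ (k + 4) r ≠ 0 := by
  have hsq : (2 * √((k + 2) * (k + 3))) ^ 2 = 4 * (k + 2) * (k + 3) := by
    rw [mul_pow, sq_sqrt (by nlinarith)]
    ring
  have hF (x : ℝ) (hx : x ∈ Ioo (a ^ 2) (b ^ 2)) : besselSeries (k + 1) x ≠ 0 := by
    have hx0 : 0 < x := (pow_pos ha 2).trans hx.1
    have hax : a < √x := (lt_sqrt ha.le).2 hx.1
    have hxb : √x < b := (sqrt_lt' (ha.trans (hA.trans hB))).2 hx.2
    have := hne √x ⟨hax, hxb⟩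
    rw [besselJ_eq_rpow_mul_besselSeries _ (ha.trans hax), sq_sqrt hx0.le] at this
    exact right_ne_zero_of_mul this
  intro r hr
  have hr0 := ha.trans hr.1
  have hr2 : r ^ 2 ∈ Ioo (a ^ 2) (b ^ 2) := ⟨by gcongr; exact hr.1, by gcongr; exact hr.2⟩
  have hγ : 4 * (k + 2) * (k + 3) ∈ Ioo (a ^ 2) (b ^ 2) := by
    rw [← hsq]
    exact ⟨by gcongr, by gcongr⟩
  rw [besselJ_eq_rpow_mul_besselSeries _ hr0]
  exact mul_ne_zero (rpow_pos_of_pos (by positivity) _).ne' <|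
    besselSeries_add_four_ne_zero hk (by positivity) fun y hy =>
      hF y (ordConnected_Ioo.uIcc_subset hr2 hγ hy)

/-- If the point `2√((k+2)(k+3))` lies strictly between consecutive zeros `a < b` of `J_{k+1}`,
then `J_{k+4}` has no zero in `(a, b)`. -/
theorem besselJ_add_four_no_zero (k : ℝ) (hk : -1 < k) (a b : ℝ)
    (ha : 0 < a) (hab : a < b)
    (hza : besselJ (k + 1) a = 0) (hzb : besselJ (k + 1) b = 0)
    (hne : ∀ r ∈ Set.Ioo a b, besselJ (k + 1) r ≠ 0)
    (hA : a < 2 * Real.sqrt ((k + 2) * (k + 3)))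
    (hB : 2 * Real.sqrt ((k + 2) * (k + 3)) < b) :
    ∀ r ∈ Set.Ioo a b, besselJ (k + 4) r ≠ 0 :=
  besselJ_add_four_no_zero_general k hk a b ha hne hA hB
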